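/- arXiv:1611.04613 — 2 statements merged into one kernel-verified Lean document; each statement's English description precedes it below -/
import Mathlib

section
/- Let v̄_p > 0 and let p3 ≠ 0 be a real constant. Suppose u1, x2, x3, p2 : ℝ → ℝ are differentiable on an interval I, with x2(t) > 0 and cos u1(t) ≠ 0 for all t ∈ I, satisfying on I the state equation deriv x3 = (v̄_p / x2) · cos u1, the derived control equation deriv u1 = v̄_p (p2/p3) · sin u1 · (cos u1)² − (v̄_p / x2) · (cos u1)³, and the first-order optimality condition tan u1 = −(p2/p3) · x2. Then u1 + x3 is constant on I. -/
/-!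
The optimality condition `tan u1 = -(p2/p3) x2` lets one eliminate `p2/p3` from the control
equation: `u̇1 = -(v̄_p / x2) cos u1 (sin² u1 + cos² u1) = -(v̄_p / x2) cos u1 = -ẋ3`.
Hence `u1 + x3` has zero derivative on the convex set `I`, and is constant there by the mean
value inequality.
-/

open Real

theorem Convex.exists_forall_eq_of_hasDerivWithinAt_zero {E : Type*} [NormedAddCommGroup E]
    [NormedSpace ℝ E] {f : ℝ → E} {s : Set ℝ} (hs : Convex ℝ s)
    (hf : ∀ t ∈ s, HasDerivWithinAt f 0 s t) : ∃ k, ∀ t ∈ s, f t = k := by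
  rcases s.eq_empty_or_nonempty with rfl | ⟨t₀, ht₀⟩
  · exact ⟨0, fun t ht => ht.elim⟩
  refine ⟨f t₀, fun t ht => ?_⟩
  have h := hs.norm_image_sub_le_of_norm_hasDerivWithin_le hf (C := 0) (fun _ _ => by simp) ht₀ ht
  simpa [sub_eq_zero] using h

theorem mul_sin_mul_cos_sq_sub_div_mul_cos_pow_three_of_tan_eq {v q x u : ℝ} (hx : x ≠ 0)
    (hc : cos u ≠ 0) (htan : tan u = -q * x) :
    v * q * sin u * cos u ^ 2 - v / x * cos u ^ 3 = -(v / x * cos u) := by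
  have hsin : sin u = -q * x * cos u := by
    rwa [tan_eq_sin_div_cos, div_eq_iff hc] at htan
  field_simp
  linear_combination v * sin u * hsin - v * sin_sq_add_cos_sq u

theorem heading_plus_polar_angle_constant_general
    (vp p3 : ℝ)
    (u1 x2 x3 p2 : ℝ → ℝ) (I : Set ℝ) (hI : Convex ℝ I)
    (hx2pos : ∀ t ∈ I, x2 t > 0)
    (hcos : ∀ t ∈ I, Real.cos (u1 t) ≠ 0)
    (hx3 : ∀ t ∈ I, HasDerivAt x3 ((vp / x2 t) * Real.cos (u1 t)) t)
    (hu1 : ∀ t ∈ I, HasDerivAt u1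
      (vp * (p2 t / p3) * Real.sin (u1 t) * (Real.cos (u1 t)) ^ 2
        - (vp / x2 t) * (Real.cos (u1 t)) ^ 3) t)
    (hopt : ∀ t ∈ I, Real.tan (u1 t) = -(p2 t / p3) * x2 t) :
    ∃ k : ℝ, ∀ t ∈ I, u1 t + x3 t = k := by
  refine hI.exists_forall_eq_of_hasDerivWithinAt_zero fun t ht => ?_
  have hu1' : HasDerivAt u1 (-(vp / x2 t * cos (u1 t))) t := by
    rw [← mul_sin_mul_cos_sq_sub_div_mul_cos_pow_three_of_tan_eq (hx2pos t ht).ne' (hcos t ht)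
      (hopt t ht)]
    exact hu1 t ht
  simpa using (hu1'.fun_add (hx3 t ht)).hasDerivWithinAt

/-- Along an optimal trajectory in the inactive-constraint regime (state equation
`ẋ3 = (v̄_p / x2) cos u1`, control equation
`u̇1 = v̄_p (p2/p3) sin u1 cos² u1 − (v̄_p / x2) cos³ u1`, and first-order optimality
condition `tan u1 = −(p2/p3) x2`), the quantity `u1 + x3` is constant. -/
theorem heading_plus_polar_angle_constant
    (vp p3 : ℝ) (hvp : 0 < vp) (hp3 : p3 ≠ 0)
    (u1 x2 x3 p2 : ℝ → ℝ) (I : Set ℝ) (hI : Convex ℝ I)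
    (hx2pos : ∀ t ∈ I, x2 t > 0)
    (hcos : ∀ t ∈ I, Real.cos (u1 t) ≠ 0)
    (hp2 : ∀ t ∈ I, DifferentiableAt ℝ p2 t)
    (hx3 : ∀ t ∈ I, HasDerivAt x3 ((vp / x2 t) * Real.cos (u1 t)) t)
    (hx2 : ∀ t ∈ I, DifferentiableAt ℝ x2 t)
    (hu1 : ∀ t ∈ I, HasDerivAt u1
      (vp * (p2 t / p3) * Real.sin (u1 t) * (Real.cos (u1 t)) ^ 2
        - (vp / x2 t) * (Real.cos (u1 t)) ^ 3) t)
    (hopt : ∀ t ∈ I, Real.tan (u1 t) = -(p2 t / p3) * x2 t) :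
    ∃ k : ℝ, ∀ t ∈ I, u1 t + x3 t = k :=
  heading_plus_polar_angle_constant_general vp p3 u1 x2 x3 p2 I hI hx2pos hcos hx3 hu1 hopt
end

section
/- Let v̄_p > 0 and let p3 ≠ 0 be a real constant. Suppose u1, x2, x3, p2 : ℝ → ℝ are differentiable on an interval I containing t0, with x2(t) > 0 and cos u1(t) ≠ 0 on I, satisfying on I the equations deriv x2 = −v̄_p · sin u1, deriv x3 = (v̄_p / x2) · cos u1, deriv u1 = v̄_p (p2/p3) · sin u1 · (cos u1)² − (v̄_p / x2) · (cos u1)³, and tan u1 = −(p2/p3) · x2. Set c = u1(t0) + x3(t0) and p(t) = (x2(t) · cos x3(t), x2(t) · sin x3(t)) ∈ ℝ². Then for every t ∈ I, (p(t) − p(t0)) · (cos c, sin c) = 0; that is, the pursuer's optimal trajectory in the inactive-constraint regime is a straight line through p(t0) with slope −cot c. -/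
/-! With `c = u1 t0 + x3 t0`, the projection of `p t` on `(cos c, sin c)` is
`x2 t * cos (c - x3 t)`. The optimality condition turns the equation for `u1'` into
`u1' = -(vp / x2) cos u1 = -x3'`, so `u1 + x3 ≡ c` and the projection equals
`x2 * cos u1`, whose derivative `-vp sin u1 cos u1 + x2 sin u1 (vp / x2) cos u1` vanishes. -/

open Real

theorem Convex.eq_of_hasDerivWithinAt_zero {E : Type*} [NormedAddCommGroup E]
    [NormedSpace ℝ E] {f : ℝ → E} {s : Set ℝ} (hs : Convex ℝ s)
    (hf : ∀ x ∈ s, HasDerivWithinAt f 0 s x) {x y : ℝ} (hx : x ∈ s) (hy : y ∈ s) :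
    f y = f x := by
  have h := hs.norm_image_sub_le_of_norm_hasDerivWithin_le (C := 0) hf
    (fun _ _ => norm_zero.le) hx hy
  rwa [zero_mul, norm_le_zero_iff, sub_eq_zero] at h

theorem mul_sin_mul_cos_sq_sub_div_mul_cos_cube_of_tan_eq {u q x : ℝ} (v : ℝ)
    (hx : x ≠ 0) (hu : cos u ≠ 0) (htan : tan u = -q * x) :
    v * q * sin u * cos u ^ 2 - v / x * cos u ^ 3 = -(v / x * cos u) := by
  rw [tan_eq_sin_div_cos, div_eq_iff hu] at htan
  field_simp
  linear_combination v * sin u * htan - v * sin_sq_add_cos_sq u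

theorem add_eq_of_hasDerivAt_neg {f g g' : ℝ → ℝ} {I : Set ℝ} (hI : Convex ℝ I)
    (hf : ∀ t ∈ I, HasDerivAt f (-g' t) t) (hg : ∀ t ∈ I, HasDerivAt g (g' t) t)
    {t0 t : ℝ} (ht0 : t0 ∈ I) (ht : t ∈ I) :
    f t + g t = f t0 + g t0 :=
  hI.eq_of_hasDerivWithinAt_zero (f := f + g)
    (fun s hs => by simpa using ((hf s hs).add (hg s hs)).hasDerivWithinAt) ht0 ht

theorem mul_cos_eq_of_hasDerivAt {vp : ℝ} {u1 x2 : ℝ → ℝ} {I : Set ℝ} (hI : Convex ℝ I)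
    (hx2pos : ∀ t ∈ I, 0 < x2 t) (hx2 : ∀ t ∈ I, HasDerivAt x2 (-vp * sin (u1 t)) t)
    (hu1 : ∀ t ∈ I, HasDerivAt u1 (-(vp / x2 t * cos (u1 t))) t)
    {t0 t : ℝ} (ht0 : t0 ∈ I) (ht : t ∈ I) :
    x2 t * cos (u1 t) = x2 t0 * cos (u1 t0) := by
  refine hI.eq_of_hasDerivWithinAt_zero (f := fun t => x2 t * cos (u1 t))
    (fun s hs => ?_) ht0 ht
  have hd : HasDerivAt (fun t => x2 t * cos (u1 t)) _ s := (hx2 s hs).mul (hu1 s hs).cos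
  have hzero : -vp * sin (u1 s) * cos (u1 s) + x2 s * (-sin (u1 s) * -(vp / x2 s * cos (u1 s)))
      = 0 := by
    field_simp [(hx2pos s hs).ne']
    ring
  exact (hzero ▸ hd).hasDerivWithinAt

theorem optimal_trajectory_is_straight_line_general
    (vp p3 : ℝ)
    (u1 x2 x3 p2 : ℝ → ℝ) (I : Set ℝ) (hI : Convex ℝ I) (t0 : ℝ) (ht0 : t0 ∈ I)
    (hx2pos : ∀ t ∈ I, x2 t > 0)
    (hcos : ∀ t ∈ I, Real.cos (u1 t) ≠ 0)
    (hx2 : ∀ t ∈ I, HasDerivAt x2 (-vp * Real.sin (u1 t)) t)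
    (hx3 : ∀ t ∈ I, HasDerivAt x3 ((vp / x2 t) * Real.cos (u1 t)) t)
    (hu1 : ∀ t ∈ I, HasDerivAt u1
      (vp * (p2 t / p3) * Real.sin (u1 t) * (Real.cos (u1 t)) ^ 2
        - (vp / x2 t) * (Real.cos (u1 t)) ^ 3) t)
    (hopt : ∀ t ∈ I, Real.tan (u1 t) = -(p2 t / p3) * x2 t) :
    ∀ t ∈ I,
      (x2 t * Real.cos (x3 t) - x2 t0 * Real.cos (x3 t0)) * Real.cos (u1 t0 + x3 t0)
        + (x2 t * Real.sin (x3 t) - x2 t0 * Real.sin (x3 t0)) * Real.sin (u1 t0 + x3 t0)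
        = 0 := by
  intro t ht
  have hu1' : ∀ s ∈ I, HasDerivAt u1 (-(vp / x2 s * cos (u1 s))) s := fun s hs => by
    simpa only [mul_sin_mul_cos_sq_sub_div_mul_cos_cube_of_tan_eq vp (hx2pos s hs).ne'
      (hcos s hs) (hopt s hs)] using hu1 s hs
  have hproj : ∀ s ∈ I, x2 s * cos (x3 s) * cos (u1 t0 + x3 t0)
      + x2 s * sin (x3 s) * sin (u1 t0 + x3 t0) = x2 s * cos (u1 s) := fun s hs => by
    have hu : u1 s = u1 t0 + x3 t0 - x3 s := by
      linarith [add_eq_of_hasDerivAt_neg (g' := fun t => vp / x2 t * cos (u1 t))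
        hI hu1' hx3 ht0 hs]
    rw [hu, cos_sub]
    ring
  linear_combination
    hproj t ht - hproj t0 ht0 + mul_cos_eq_of_hasDerivAt hI hx2pos hx2 hu1' ht0 ht

/-- In the inactive-constraint regime, the pursuer's Cartesian trajectory
`p t = (x2 t cos (x3 t), x2 t sin (x3 t))` is a straight line through `p t0`
orthogonal to `(cos c, sin c)`, where `c = u1 t0 + x3 t0`. -/
theorem optimal_trajectory_is_straight_line
    (vp p3 : ℝ) (hvp : 0 < vp) (hp3 : p3 ≠ 0)
    (u1 x2 x3 p2 : ℝ → ℝ) (I : Set ℝ) (hI : Convex ℝ I) (t0 : ℝ) (ht0 : t0 ∈ I)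
    (hx2pos : ∀ t ∈ I, x2 t > 0)
    (hcos : ∀ t ∈ I, Real.cos (u1 t) ≠ 0)
    (hp2 : ∀ t ∈ I, DifferentiableAt ℝ p2 t)
    (hx2 : ∀ t ∈ I, HasDerivAt x2 (-vp * Real.sin (u1 t)) t)
    (hx3 : ∀ t ∈ I, HasDerivAt x3 ((vp / x2 t) * Real.cos (u1 t)) t)
    (hu1 : ∀ t ∈ I, HasDerivAt u1
      (vp * (p2 t / p3) * Real.sin (u1 t) * (Real.cos (u1 t)) ^ 2
        - (vp / x2 t) * (Real.cos (u1 t)) ^ 3) t)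
    (hopt : ∀ t ∈ I, Real.tan (u1 t) = -(p2 t / p3) * x2 t) :
    ∀ t ∈ I,
      (x2 t * Real.cos (x3 t) - x2 t0 * Real.cos (x3 t0)) * Real.cos (u1 t0 + x3 t0)
        + (x2 t * Real.sin (x3 t) - x2 t0 * Real.sin (x3 t0)) * Real.sin (u1 t0 + x3 t0)
        = 0 :=
  optimal_trajectory_is_straight_line_general vp p3 u1 x2 x3 p2 I hI t0 ht0 hx2pos hcos hx2 hx3 hu1
    hopt
end
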